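/- arXiv:1009.5490 — 6 statements merged into one kernel-verified Lean document; each statement's English description precedes it below -/
import Mathlib

section
/- Let f, g : ℝ × ℝ → ℝ be C² functions, let ε ∈ ℝ, and suppose f is a solution of the Born-Infeld equation on ℝ². Assume that (i) for all (x,t), g(x·cos ε − f(x,t)·sin ε, t) = x·sin ε + f(x,t)·cos ε, (ii) for all (x,t), cos ε − (∂f/∂x)(x,t)·sin ε ≠ 0, and (iii) for every (y,t) ∈ ℝ² there exists x with y = x·cos ε − f(x,t)·sin ε. Then g is a solution of the Born-Infeld equation on ℝ². (This expresses the rotation symmetry in the (x,u)-plane generated by v₅ = −u∂_x + x∂_u.) -/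
/-!
The Born–Infeld equation says that the graph of `u` has zero mean curvature in Minkowski space
with metric `dx² + du² - dt²`, so the equation is invariant under rotations of the `(x, u)`-plane.
Concretely, the graph of `g` is the rotated graph of `f`: `g ∘ R = x sin ε + f cos ε` with
`R (x, t) = (x cos ε - f sin ε, t)`. Differentiating this identity once and twice along the
coordinate lines expresses the partial derivatives of `g` at `R (x, t)` of order `≤ 2` through
those of `f` at `(x, t)` and `D = cos ε - f_x sin ε`; a polynomial identity then gives
`BI[g] (R (x, t)) · D⁵ = D² · BI[f] (x, t)`. As `D ≠ 0` and `R` is onto, `g` is a solution.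
-/

/-- Partial derivative with respect to the first variable `x`. -/
noncomputable def px (u : ℝ × ℝ → ℝ) (p : ℝ × ℝ) : ℝ := fderiv ℝ u p (1, 0)

/-- Partial derivative with respect to the second variable `t`. -/
noncomputable def pt (u : ℝ × ℝ → ℝ) (p : ℝ × ℝ) : ℝ := fderiv ℝ u p (0, 1)

/-- `u` is a (C²) solution of the Born-Infeld equation
`(1 - u_t²)·u_xx + 2·u_x·u_t·u_xt - (1 + u_x²)·u_tt = 0` on the set `Ω`:
`u` is C² on a neighborhood of `Ω` and the equation holds at every point of `Ω`. -/
def IsBISolution (u : ℝ × ℝ → ℝ) (Ω : Set (ℝ × ℝ)) : Prop :=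
  (∃ V : Set (ℝ × ℝ), IsOpen V ∧ Ω ⊆ V ∧ ContDiffOn ℝ 2 u V) ∧
  ∀ p ∈ Ω,
    (1 - pt u p ^ 2) * px (px u) p + 2 * px u p * pt u p * px (pt u) p
      - (1 + px u p ^ 2) * pt (pt u) p = 0

open Real

section Partials

variable {u : ℝ × ℝ → ℝ}

theorem fderiv_apply_eq_px_pt (q v : ℝ × ℝ) : fderiv ℝ u q v = v.1 * px u q + v.2 * pt u q := by
  have hv : v = v.1 • ((1 : ℝ), (0 : ℝ)) + v.2 • ((0 : ℝ), (1 : ℝ)) := by ext <;> simp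
  rw [hv, map_add, map_smul, map_smul]
  simp [px, pt]

theorem hasDerivAt_comp_curve {γ : ℝ → ℝ × ℝ} {v : ℝ × ℝ} {x : ℝ}
    (hγ : HasDerivAt γ v x) (hu : DifferentiableAt ℝ u (γ x)) :
    HasDerivAt (fun y => u (γ y)) (v.1 * px u (γ x) + v.2 * pt u (γ x)) x := by
  rw [← fderiv_apply_eq_px_pt]
  exact hu.hasFDerivAt.comp_hasDerivAt x hγ

theorem hasDerivAt_px {x t : ℝ} (hu : DifferentiableAt ℝ u (x, t)) :
    HasDerivAt (fun y => u (y, t)) (px u (x, t)) x := by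
  simpa using hasDerivAt_comp_curve ((hasDerivAt_id x).prodMk (hasDerivAt_const x t)) hu

theorem hasDerivAt_pt {x t : ℝ} (hu : DifferentiableAt ℝ u (x, t)) :
    HasDerivAt (fun s => u (x, s)) (pt u (x, t)) t := by
  simpa using hasDerivAt_comp_curve ((hasDerivAt_const t x).prodMk (hasDerivAt_id t)) hu

theorem ContDiff.differentiable_fderiv_apply (hu : ContDiff ℝ 2 u) (v : ℝ × ℝ) :
    Differentiable ℝ (fun q => fderiv ℝ u q v) :=
  fun q => (((hu.fderiv_right (m := 1) le_rfl).differentiable one_ne_zero) q).clm_apply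
    (differentiableAt_const v)

theorem ContDiff.differentiable_px (hu : ContDiff ℝ 2 u) : Differentiable ℝ (px u) :=
  hu.differentiable_fderiv_apply (1, 0)

theorem ContDiff.differentiable_pt (hu : ContDiff ℝ 2 u) : Differentiable ℝ (pt u) :=
  hu.differentiable_fderiv_apply (0, 1)

theorem ContDiff.fderiv_fderiv_apply (hu : ContDiff ℝ 2 u) (q v w : ℝ × ℝ) :
    fderiv ℝ (fun r => fderiv ℝ u r v) q w = fderiv ℝ (fderiv ℝ u) q w v := by
  have h2 := (hu.fderiv_right (m := 1) le_rfl).differentiable one_ne_zero q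
  have hcomp : (fun r => fderiv ℝ u r v) = ContinuousLinearMap.apply ℝ ℝ v ∘ fderiv ℝ u := rfl
  rw [hcomp, ((ContinuousLinearMap.apply ℝ ℝ v).hasFDerivAt.comp q h2.hasFDerivAt).fderiv]
  rfl

theorem ContDiff.pt_px (hu : ContDiff ℝ 2 u) (q : ℝ × ℝ) : pt (px u) q = px (pt u) q := by
  change fderiv ℝ (fun r => fderiv ℝ u r (1, 0)) q (0, 1)
    = fderiv ℝ (fun r => fderiv ℝ u r (0, 1)) q (1, 0)
  rw [hu.fderiv_fderiv_apply, hu.fderiv_fderiv_apply]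
  exact (hu.contDiffAt (x := q)).isSymmSndFDerivAt (by simp) _ _

end Partials

def bornInfeldPoly (ux ut uxx uxt utt : ℝ) : ℝ :=
  (1 - ut ^ 2) * uxx + 2 * ux * ut * uxt - (1 + ux ^ 2) * utt

theorem bornInfeldPoly_rotate {c s fx ft fxx fxt ftt gx gt gxx gxt gtt : ℝ}
    (hsc : s ^ 2 + c ^ 2 = 1)
    (hx : gx * (c - fx * s) = s + fx * c)
    (ht : gt * (c - fx * s) = ft)
    (hxx : gxx * (c - fx * s) ^ 2 = fxx * (c + gx * s))
    (hxt : (gxt - ft * s * gxx) * (c - fx * s) = fxt * (c + gx * s))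
    (htt : (gtt - ft * s * gxt) * (c - fx * s) = ftt + gt * fxt * s) :
    bornInfeldPoly gx gt gxx gxt gtt * (c - fx * s) ^ 5
      = (c - fx * s) ^ 2 * bornInfeldPoly fx ft fxx fxt ftt := by
  set D := c - fx * s
  have hinv : (c + gx * s) * D = 1 := by linear_combination s * hx + hsc
  have hgxx : gxx * D ^ 3 = fxx := by linear_combination D * hxx + fxx * hinv
  have hgxt : gxt * D ^ 3 = fxt * D + ft * s * fxx := by
    linear_combination D ^ 2 * hxt + fxt * D * hinv + ft * s * hgxx
  have hgtt : gtt * D ^ 3 = ftt * D ^ 2 + 2 * ft * fxt * s * D + ft ^ 2 * s ^ 2 * fxx := by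
    linear_combination D ^ 2 * htt + fxt * s * D * ht + ft * s * hgxt
  calc bornInfeldPoly gx gt gxx gxt gtt * D ^ 5
      = (D ^ 2 - (gt * D) ^ 2) * (gxx * D ^ 3) + 2 * (gx * D) * (gt * D) * (gxt * D ^ 3)
          - (D ^ 2 + (gx * D) ^ 2) * (gtt * D ^ 3) := by unfold bornInfeldPoly; ring
    _ = (D ^ 2 - ft ^ 2) * fxx + 2 * (s + fx * c) * ft * (fxt * D + ft * s * fxx)
          - (D ^ 2 + (s + fx * c) ^ 2)
            * (ftt * D ^ 2 + 2 * ft * fxt * s * D + ft ^ 2 * s ^ 2 * fxx) := by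
      rw [hx, ht, hgxx, hgxt, hgtt]
    _ = D ^ 2 * bornInfeldPoly fx ft fxx fxt ftt := by
      -- `D ^ 2 + (s + fx * c) ^ 2 = (1 + fx ^ 2) * (s ^ 2 + c ^ 2)`
      unfold bornInfeldPoly
      linear_combination (ft ^ 2 * fxx
        - (1 + fx ^ 2) * (ftt * D ^ 2 + 2 * ft * fxt * s * D + ft ^ 2 * s ^ 2 * fxx)) * hsc

noncomputable def bornInfeldOp (u : ℝ × ℝ → ℝ) (p : ℝ × ℝ) : ℝ :=
  bornInfeldPoly (px u p) (pt u p) (px (px u) p) (px (pt u) p) (pt (pt u) p)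

theorem IsBISolution.contDiff {u : ℝ × ℝ → ℝ} (hu : IsBISolution u Set.univ) :
    ContDiff ℝ 2 u := by
  obtain ⟨V, -, hV, hu⟩ := hu.1
  rw [Set.univ_subset_iff.1 hV, contDiffOn_univ] at hu
  exact hu

section Rotation

variable {f g : ℝ × ℝ → ℝ} {ε : ℝ}

/-- Rotating the graph point `(x, f (x, t), t)` by `ε` in the `(x, u)`-plane moves it above
`rotatedBase f ε (x, t)`. -/
noncomputable def rotatedBase (f : ℝ × ℝ → ℝ) (ε : ℝ) (q : ℝ × ℝ) : ℝ × ℝ :=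
  (q.1 * cos ε - f q * sin ε, q.2)

def IsRotatedGraph (f g : ℝ × ℝ → ℝ) (ε : ℝ) : Prop :=
  ∀ q, g (rotatedBase f ε q) = q.1 * sin ε + f q * cos ε

theorem hasDerivAt_rotatedBase_fst {x t : ℝ} (hf : DifferentiableAt ℝ f (x, t)) :
    HasDerivAt (fun y => rotatedBase f ε (y, t)) (cos ε - px f (x, t) * sin ε, 0) x := by
  simpa [rotatedBase] using (((hasDerivAt_id x).mul_const (cos ε)).sub
    ((hasDerivAt_px hf).mul_const (sin ε))).prodMk (hasDerivAt_const x t)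

theorem hasDerivAt_rotatedBase_snd {x t : ℝ} (hf : DifferentiableAt ℝ f (x, t)) :
    HasDerivAt (fun s => rotatedBase f ε (x, s)) (-(pt f (x, t) * sin ε), 1) t := by
  simpa [rotatedBase] using ((hasDerivAt_pt hf).mul_const (sin ε)).const_sub (x * cos ε) |>.prodMk
    (hasDerivAt_id t)

theorem IsRotatedGraph.px_eq (hrel : IsRotatedGraph f g ε) {x t : ℝ}
    (hf : DifferentiableAt ℝ f (x, t)) (hg : DifferentiableAt ℝ g (rotatedBase f ε (x, t))) :
    px g (rotatedBase f ε (x, t)) * (cos ε - px f (x, t) * sin ε)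
      = sin ε + px f (x, t) * cos ε := by
  have h := (hasDerivAt_comp_curve (hasDerivAt_rotatedBase_fst hf) hg).unique
    ((((hasDerivAt_id x).mul_const (sin ε)).add
      ((hasDerivAt_px hf).mul_const (cos ε))).congr_of_eventuallyEq
        (.of_forall fun y => hrel (y, t)))
  linear_combination h

theorem IsRotatedGraph.pt_eq (hrel : IsRotatedGraph f g ε) {x t : ℝ}
    (hf : DifferentiableAt ℝ f (x, t)) (hg : DifferentiableAt ℝ g (rotatedBase f ε (x, t))) :
    pt g (rotatedBase f ε (x, t)) * (cos ε - px f (x, t) * sin ε) = pt f (x, t) := by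
  have h := (hasDerivAt_comp_curve (hasDerivAt_rotatedBase_snd hf) hg).unique
    ((((hasDerivAt_pt hf).mul_const (cos ε)).const_add (x * sin ε)).congr_of_eventuallyEq
      (.of_forall fun s => hrel (x, s)))
  linear_combination (cos ε - px f (x, t) * sin ε) * h + pt f (x, t) * sin ε * hrel.px_eq hf hg
    + pt f (x, t) * sin_sq_add_cos_sq ε

theorem IsRotatedGraph.px_px_eq (hrel : IsRotatedGraph f g ε) (hf : ContDiff ℝ 2 f)
    (hg : ContDiff ℝ 2 g) (x t : ℝ) :
    px (px g) (rotatedBase f ε (x, t)) * (cos ε - px f (x, t) * sin ε) ^ 2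
      = px (px f) (x, t) * (cos ε + px g (rotatedBase f ε (x, t)) * sin ε) := by
  have hf1 := hf.differentiable two_ne_zero
  have hfxx := hasDerivAt_px (hf.differentiable_px (x, t))
  have h := ((hasDerivAt_comp_curve (hasDerivAt_rotatedBase_fst (hf1 (x, t)))
    (hg.differentiable_px _)).mul ((hfxx.mul_const (sin ε)).const_sub (cos ε))).unique
    (((hfxx.mul_const (cos ε)).const_add (sin ε)).congr_of_eventuallyEq
      (.of_forall fun y => hrel.px_eq (hf1 (y, t)) (hg.differentiable two_ne_zero _)))
  linear_combination h

theorem IsRotatedGraph.px_pt_eq (hrel : IsRotatedGraph f g ε) (hf : ContDiff ℝ 2 f)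
    (hg : ContDiff ℝ 2 g) (x t : ℝ) :
    (px (pt g) (rotatedBase f ε (x, t)) - pt f (x, t) * sin ε * px (px g) (rotatedBase f ε (x, t)))
        * (cos ε - px f (x, t) * sin ε)
      = px (pt f) (x, t) * (cos ε + px g (rotatedBase f ε (x, t)) * sin ε) := by
  have hf1 := hf.differentiable two_ne_zero
  have hfxt := hasDerivAt_pt (hf.differentiable_px (x, t))
  have h := ((hasDerivAt_comp_curve (hasDerivAt_rotatedBase_snd (hf1 (x, t)))
    (hg.differentiable_px _)).mul ((hfxt.mul_const (sin ε)).const_sub (cos ε))).unique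
    (((hfxt.mul_const (cos ε)).const_add (sin ε)).congr_of_eventuallyEq
      (.of_forall fun s => hrel.px_eq (hf1 (x, s)) (hg.differentiable two_ne_zero _)))
  rw [hf.pt_px, hg.pt_px] at h
  linear_combination h

theorem IsRotatedGraph.pt_pt_eq (hrel : IsRotatedGraph f g ε) (hf : ContDiff ℝ 2 f)
    (hg : ContDiff ℝ 2 g) (x t : ℝ) :
    (pt (pt g) (rotatedBase f ε (x, t)) - pt f (x, t) * sin ε * px (pt g) (rotatedBase f ε (x, t)))
        * (cos ε - px f (x, t) * sin ε)
      = pt (pt f) (x, t) + pt g (rotatedBase f ε (x, t)) * px (pt f) (x, t) * sin ε := by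
  have hf1 := hf.differentiable two_ne_zero
  have h := ((hasDerivAt_comp_curve (hasDerivAt_rotatedBase_snd (hf1 (x, t)))
    (hg.differentiable_pt _)).mul
      (((hasDerivAt_pt (hf.differentiable_px (x, t))).mul_const (sin ε)).const_sub (cos ε))).unique
    ((hasDerivAt_pt (hf.differentiable_pt (x, t))).congr_of_eventuallyEq
      (.of_forall fun s => hrel.pt_eq (hf1 (x, s)) (hg.differentiable two_ne_zero _)))
  rw [hf.pt_px] at h
  linear_combination h

theorem IsRotatedGraph.bornInfeldOp_eq (hrel : IsRotatedGraph f g ε) (hf : ContDiff ℝ 2 f)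
    (hg : ContDiff ℝ 2 g) (x t : ℝ) :
    bornInfeldOp g (rotatedBase f ε (x, t)) * (cos ε - px f (x, t) * sin ε) ^ 5
      = (cos ε - px f (x, t) * sin ε) ^ 2 * bornInfeldOp f (x, t) :=
  bornInfeldPoly_rotate (sin_sq_add_cos_sq ε)
    (hrel.px_eq (hf.differentiable two_ne_zero _) (hg.differentiable two_ne_zero _))
    (hrel.pt_eq (hf.differentiable two_ne_zero _) (hg.differentiable two_ne_zero _))
    (hrel.px_px_eq hf hg x t) (hrel.px_pt_eq hf hg x t) (hrel.pt_pt_eq hf hg x t)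

end Rotation

theorem bornInfeld_rotation_symmetry_general
    (f g : ℝ × ℝ → ℝ) (hg : ContDiff ℝ 2 g) (ε : ℝ)
    (hsol : IsBISolution f Set.univ)
    (hrel : ∀ x t : ℝ,
      g (x * Real.cos ε - f (x, t) * Real.sin ε, t)
        = x * Real.sin ε + f (x, t) * Real.cos ε)
    (hnd : ∀ x t : ℝ, Real.cos ε - px f (x, t) * Real.sin ε ≠ 0)
    (hsurj : ∀ y t : ℝ, ∃ x : ℝ, y = x * Real.cos ε - f (x, t) * Real.sin ε) :
    IsBISolution g Set.univ := by
  refine ⟨⟨Set.univ, isOpen_univ, subset_rfl, hg.contDiffOn⟩, ?_⟩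
  rintro ⟨y, t⟩ -
  obtain ⟨x, rfl⟩ := hsurj y t
  have hrot : IsRotatedGraph f g ε := fun q => hrel q.1 q.2
  have h := hrot.bornInfeldOp_eq hsol.contDiff hg x t
  rw [show bornInfeldOp f (x, t) = 0 from hsol.2 (x, t) trivial, mul_zero] at h
  exact (mul_eq_zero.1 h).resolve_right (pow_ne_zero 5 (hnd x t))

/-- Rotation symmetry in the `(x,u)`-plane, `v₅ = −u∂ₓ + x∂_u`,
of the Born-Infeld equation. -/
theorem bornInfeld_rotation_symmetry
    (f g : ℝ × ℝ → ℝ) (hf : ContDiff ℝ 2 f) (hg : ContDiff ℝ 2 g) (ε : ℝ)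
    (hsol : IsBISolution f Set.univ)
    (hrel : ∀ x t : ℝ,
      g (x * Real.cos ε - f (x, t) * Real.sin ε, t)
        = x * Real.sin ε + f (x, t) * Real.cos ε)
    (hnd : ∀ x t : ℝ, Real.cos ε - px f (x, t) * Real.sin ε ≠ 0)
    (hsurj : ∀ y t : ℝ, ∃ x : ℝ, y = x * Real.cos ε - f (x, t) * Real.sin ε) :
    IsBISolution g Set.univ :=
  bornInfeld_rotation_symmetry_general f g hg ε hsol hrel hnd hsurj
end

section
/- Let I ⊆ ℝ be an open interval and let v : ℝ → ℝ be C² on I and satisfy the reduced ordinary differential equation v'(y) + y·v''(y) − 2y·v'(y)³ = 0 for all y ∈ I. Then the function u(x,t) = v(t² − x²) is a solution of the Born-Infeld equation on the open set Ω = {(x,t) ∈ ℝ² : t² − x² ∈ I}. (This is the symmetry reduction by the boost v₄ = t∂_x + x∂_t, with similarity variable y = −x² + t².) -/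
/-!
Write `y = t² − x²` and `a = v'(y)`, `b = v''(y)`. The chain rule gives
`u_x = −2x a`, `u_t = 2t a`, `u_xx = 4x² b − 2a`, `u_xt = −4xt b`, `u_tt = 4t² b + 2a`,
and substituting these, the Born–Infeld expression collapses to `−4 (a + y b − 2y a³)`,
which vanishes by the reduced equation.
-/

open Filter Topology ContinuousLinearMap

theorem Filter.EventuallyEq.px_eq {u w : ℝ × ℝ → ℝ} {p : ℝ × ℝ} (h : u =ᶠ[𝓝 p] w) :
    px u p = px w p := by
  rw [px, px, h.fderiv_eq]

theorem Filter.EventuallyEq.pt_eq {u w : ℝ × ℝ → ℝ} {p : ℝ × ℝ} (h : u =ᶠ[𝓝 p] w) :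
    pt u p = pt w p := by
  rw [pt, pt, h.fderiv_eq]

section SqSubSq

variable {f : ℝ → ℝ} {f' : ℝ} {p : ℝ × ℝ}

theorem hasFDerivAt_comp_sq_sub_sq (hf : HasDerivAt f f' (p.2 ^ 2 - p.1 ^ 2)) :
    HasFDerivAt (fun q : ℝ × ℝ => f (q.2 ^ 2 - q.1 ^ 2))
      (f' • ((2 * p.2) • snd ℝ ℝ ℝ - (2 * p.1) • fst ℝ ℝ ℝ)) p := by
  have hφ : HasFDerivAt (fun q : ℝ × ℝ => q.2 ^ 2 - q.1 ^ 2)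
      ((2 * p.2) • snd ℝ ℝ ℝ - (2 * p.1) • fst ℝ ℝ ℝ) p := by
    refine (((hasFDerivAt_snd (p := p)).pow 2).sub
      ((hasFDerivAt_fst (p := p)).pow 2)).congr_fderiv ?_
    ext <;> simp
  exact hf.comp_hasFDerivAt p hφ

theorem px_comp_sq_sub_sq (hf : HasDerivAt f f' (p.2 ^ 2 - p.1 ^ 2)) :
    px (fun q : ℝ × ℝ => f (q.2 ^ 2 - q.1 ^ 2)) p = -2 * p.1 * f' := by
  rw [px, (hasFDerivAt_comp_sq_sub_sq hf).fderiv]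
  simp only [smul_apply, sub_apply, coe_fst', coe_snd', smul_eq_mul]
  ring

theorem pt_comp_sq_sub_sq (hf : HasDerivAt f f' (p.2 ^ 2 - p.1 ^ 2)) :
    pt (fun q : ℝ × ℝ => f (q.2 ^ 2 - q.1 ^ 2)) p = 2 * p.2 * f' := by
  rw [pt, (hasFDerivAt_comp_sq_sub_sq hf).fderiv]
  simp only [smul_apply, sub_apply, coe_fst', coe_snd', smul_eq_mul]
  ring

theorem px_fst_mul_comp_sq_sub_sq (c : ℝ) (hf : HasDerivAt f f' (p.2 ^ 2 - p.1 ^ 2)) :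
    px (fun q : ℝ × ℝ => c * q.1 * f (q.2 ^ 2 - q.1 ^ 2)) p
      = c * f (p.2 ^ 2 - p.1 ^ 2) - 2 * c * p.1 ^ 2 * f' := by
  have h : HasFDerivAt (fun q : ℝ × ℝ => c * q.1 * f (q.2 ^ 2 - q.1 ^ 2)) _ p :=
    (hasFDerivAt_fst.const_mul c).mul (hasFDerivAt_comp_sq_sub_sq hf)
  rw [px, h.fderiv]
  simp only [add_apply, smul_apply, sub_apply, coe_fst', coe_snd', smul_eq_mul]
  ring

theorem pt_snd_mul_comp_sq_sub_sq (c : ℝ) (hf : HasDerivAt f f' (p.2 ^ 2 - p.1 ^ 2)) :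
    pt (fun q : ℝ × ℝ => c * q.2 * f (q.2 ^ 2 - q.1 ^ 2)) p
      = c * f (p.2 ^ 2 - p.1 ^ 2) + 2 * c * p.2 ^ 2 * f' := by
  have h : HasFDerivAt (fun q : ℝ × ℝ => c * q.2 * f (q.2 ^ 2 - q.1 ^ 2)) _ p :=
    (hasFDerivAt_snd.const_mul c).mul (hasFDerivAt_comp_sq_sub_sq hf)
  rw [pt, h.fderiv]
  simp only [add_apply, smul_apply, sub_apply, coe_fst', coe_snd', smul_eq_mul]
  ring

theorem px_snd_mul_comp_sq_sub_sq (c : ℝ) (hf : HasDerivAt f f' (p.2 ^ 2 - p.1 ^ 2)) :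
    px (fun q : ℝ × ℝ => c * q.2 * f (q.2 ^ 2 - q.1 ^ 2)) p = -2 * c * p.1 * p.2 * f' := by
  have h : HasFDerivAt (fun q : ℝ × ℝ => c * q.2 * f (q.2 ^ 2 - q.1 ^ 2)) _ p :=
    (hasFDerivAt_snd.const_mul c).mul (hasFDerivAt_comp_sq_sub_sq hf)
  rw [px, h.fderiv]
  simp only [add_apply, smul_apply, sub_apply, coe_fst', coe_snd', smul_eq_mul]
  ring

end SqSubSq

theorem bornInfeld_reduction_boost_general
    (I : Set ℝ) (hIopen : IsOpen I)
    (v : ℝ → ℝ) (hv : ContDiffOn ℝ 2 v I)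
    (hode : ∀ y ∈ I, deriv v y + y * deriv (deriv v) y - 2 * y * (deriv v y) ^ 3 = 0) :
    IsBISolution (fun p : ℝ × ℝ => v (p.2 ^ 2 - p.1 ^ 2))
      {p : ℝ × ℝ | p.2 ^ 2 - p.1 ^ 2 ∈ I} := by
  set Ω : Set (ℝ × ℝ) := {p | p.2 ^ 2 - p.1 ^ 2 ∈ I}
  have hφ : ContDiff ℝ 2 fun p : ℝ × ℝ => p.2 ^ 2 - p.1 ^ 2 := by fun_prop
  have hΩ : IsOpen Ω := hIopen.preimage hφ.continuous
  have hv' : ∀ y ∈ I, HasDerivAt v (deriv v y) y := fun y hy =>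
    (hv.differentiableOn two_ne_zero |>.differentiableAt (hIopen.mem_nhds hy)).hasDerivAt
  have hv'' : ∀ y ∈ I, HasDerivAt (deriv v) (deriv (deriv v) y) y := fun y hy =>
    ((hv.deriv_of_isOpen hIopen le_rfl).differentiableOn one_ne_zero
      |>.differentiableAt (hIopen.mem_nhds hy)).hasDerivAt
  refine ⟨⟨Ω, hΩ, subset_rfl, hv.comp hφ.contDiffOn fun p hp => hp⟩, fun p hp => ?_⟩
  have hux : px (fun q : ℝ × ℝ => v (q.2 ^ 2 - q.1 ^ 2)) =ᶠ[𝓝 p]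
      fun q => -2 * q.1 * deriv v (q.2 ^ 2 - q.1 ^ 2) :=
    eventually_of_mem (hΩ.mem_nhds hp) fun q hq => px_comp_sq_sub_sq (hv' _ hq)
  have hut : pt (fun q : ℝ × ℝ => v (q.2 ^ 2 - q.1 ^ 2)) =ᶠ[𝓝 p]
      fun q => 2 * q.2 * deriv v (q.2 ^ 2 - q.1 ^ 2) :=
    eventually_of_mem (hΩ.mem_nhds hp) fun q hq => pt_comp_sq_sub_sq (hv' _ hq)
  rw [hux.px_eq, hut.px_eq, hut.pt_eq, px_comp_sq_sub_sq (hv' _ hp), pt_comp_sq_sub_sq (hv' _ hp),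
    px_fst_mul_comp_sq_sub_sq _ (hv'' _ hp), px_snd_mul_comp_sq_sub_sq _ (hv'' _ hp),
    pt_snd_mul_comp_sq_sub_sq _ (hv'' _ hp)]
  linear_combination (-4 : ℝ) * hode _ hp

/-- Symmetry reduction by the boost `v₄ = t∂ₓ + x∂_t` with similarity variable
`y = −x² + t²`: if `v` solves `v' + y v'' − 2y (v')³ = 0` on an open interval `I`,
then `u(x,t) = v(t² − x²)` solves the Born-Infeld equation on
`{(x,t) : t² − x² ∈ I}`. -/
theorem bornInfeld_reduction_boost
    (I : Set ℝ) (hIopen : IsOpen I) (hIinterval : I.OrdConnected)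
    (v : ℝ → ℝ) (hv : ContDiffOn ℝ 2 v I)
    (hode : ∀ y ∈ I, deriv v y + y * deriv (deriv v) y - 2 * y * (deriv v y) ^ 3 = 0) :
    IsBISolution (fun p : ℝ × ℝ => v (p.2 ^ 2 - p.1 ^ 2))
      {p : ℝ × ℝ | p.2 ^ 2 - p.1 ^ 2 ∈ I} :=
  bornInfeld_reduction_boost_general I hIopen v hv hode
end

section
/- Let I ⊆ ℝ be an open interval and let v : ℝ → ℝ be C² on I and satisfy v'(t)² − v(t)·v''(t) − 2·v(t) = 0 for all t ∈ I. Then the function u(x,t) = √(v(t) − x²) is a solution of the Born-Infeld equation on the open set Ω = {(x,t) ∈ ℝ² : t ∈ I and x² < v(t)}. (This is the symmetry reduction by v₅ = −u∂_x + x∂_u, with invariant x² + u² = v(t).) -/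
/-
Each partial derivative of `u = √(v t - x²)` is an ordinary derivative along a coordinate line.
Writing `S = √(v t - x²)`, the first derivatives have the form `g / (2S)` and the second ones
`g' / (2S) - g f' / (4S³)`. Substituting them and using `S² + x² = v` turns the Born-Infeld operator
into `((v')² - v v'' - 2v) / (2S³)`, which vanishes by the ODE.
-/

open Filter Topology

theorem px_eq_of_hasDerivAt {f : ℝ × ℝ → ℝ} {g : ℝ → ℝ} {p : ℝ × ℝ} {a : ℝ}
    (hf : DifferentiableAt ℝ f p) (hfg : ∀ᶠ x in 𝓝 p.1, f (x, p.2) = g x)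
    (hg : HasDerivAt g a p.1) : px f p = a := by
  have hline : HasDerivAt (fun x => f (x, p.2)) (px f p) p.1 :=
    hf.hasFDerivAt.comp_hasDerivAt p.1 ((hasDerivAt_id p.1).prodMk (hasDerivAt_const p.1 p.2))
  exact hline.unique (hg.congr_of_eventuallyEq hfg)

theorem pt_eq_of_hasDerivAt {f : ℝ × ℝ → ℝ} {g : ℝ → ℝ} {p : ℝ × ℝ} {a : ℝ}
    (hf : DifferentiableAt ℝ f p) (hfg : ∀ᶠ t in 𝓝 p.2, f (p.1, t) = g t)
    (hg : HasDerivAt g a p.2) : pt f p = a := by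
  have hline : HasDerivAt (fun t => f (p.1, t)) (pt f p) p.2 :=
    hf.hasFDerivAt.comp_hasDerivAt p.2 ((hasDerivAt_const p.2 p.1).prodMk (hasDerivAt_id p.2))
  exact hline.unique (hg.congr_of_eventuallyEq hfg)

theorem ContDiffOn.differentiableAt_fderiv_apply {E F : Type*} [NormedAddCommGroup E]
    [NormedSpace ℝ E] [NormedAddCommGroup F] [NormedSpace ℝ F] {f : E → F} {s : Set E}
    {n : WithTop ℕ∞} (hf : ContDiffOn ℝ n f s) (hs : IsOpen s) (hn : 2 ≤ n) {x : E} (hx : x ∈ s)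
    (w : E) : DifferentiableAt ℝ (fun y => fderiv ℝ f y w) x :=
  (((hf.fderiv_of_isOpen hs (m := 1) hn).clm_apply contDiffOn_const).differentiableOn
    one_ne_zero).differentiableAt (hs.mem_nhds hx)

theorem ContDiffOn.hasDerivAt_deriv {f : ℝ → ℝ} {s : Set ℝ} {n : WithTop ℕ∞}
    (hf : ContDiffOn ℝ n f s) (hs : IsOpen s) (hn : n ≠ 0) {x : ℝ} (hx : x ∈ s) :
    HasDerivAt f (deriv f x) x :=
  ((hf.differentiableOn hn).differentiableAt (hs.mem_nhds hx)).hasDerivAt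

theorem IsOpen.eventually_mk_left_mem {s : Set (ℝ × ℝ)} (hs : IsOpen s) {p : ℝ × ℝ}
    (hp : p ∈ s) : ∀ᶠ x in 𝓝 p.1, (x, p.2) ∈ s :=
  (continuous_id.prodMk continuous_const).continuousAt.preimage_mem_nhds (hs.mem_nhds hp)

theorem IsOpen.eventually_mk_right_mem {s : Set (ℝ × ℝ)} (hs : IsOpen s) {p : ℝ × ℝ}
    (hp : p ∈ s) : ∀ᶠ t in 𝓝 p.2, (p.1, t) ∈ s :=
  (continuous_const.prodMk continuous_id).continuousAt.preimage_mem_nhds (hs.mem_nhds hp)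

theorem HasDerivAt.div_two_sqrt {f g : ℝ → ℝ} {f' g' t : ℝ} (hf : HasDerivAt f f' t)
    (hg : HasDerivAt g g' t) (ht : 0 < f t) :
    HasDerivAt (fun s => g s / (2 * √(f s)))
      (g' / (2 * √(f t)) - g t * f' / (4 * √(f t) ^ 3)) t := by
  have hS : 0 < √(f t) := Real.sqrt_pos.mpr ht
  refine (hg.fun_div ((hf.sqrt ht.ne').const_mul 2) (by positivity)).congr_deriv ?_
  field_simp
  ring

theorem bornInfeld_sqrt_identity {S x v v' v'' : ℝ} (hS : 0 < S) (hv : S ^ 2 + x ^ 2 = v) :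
    (1 - (v' / (2 * S)) ^ 2) * (-2 / (2 * S) - -2 * x * (-2 * x) / (4 * S ^ 3))
      + 2 * (-2 * x / (2 * S)) * (v' / (2 * S)) * (0 / (2 * S) - v' * (-2 * x) / (4 * S ^ 3))
      - (1 + (-2 * x / (2 * S)) ^ 2) * (v'' / (2 * S) - v' * v' / (4 * S ^ 3))
      = (v' ^ 2 - v * v'' - 2 * v) / (2 * S ^ 3) := by
  subst hv
  field_simp
  ring

section SqrtProfile

variable {v : ℝ → ℝ}

theorem isOpen_setOf_sq_lt {I : Set ℝ} (hI : IsOpen I) (hv : ContinuousOn v I) :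
    IsOpen {p : ℝ × ℝ | p.2 ∈ I ∧ p.1 ^ 2 < v p.2} := by
  have hw : ContinuousOn (fun q : ℝ × ℝ => v q.2 - q.1 ^ 2) (Prod.snd ⁻¹' I) :=
    (hv.comp continuous_snd.continuousOn fun _ hq => hq).sub (by fun_prop)
  simpa [Set.preimage, Set.ofPred_and, sub_pos] using
    hw.isOpen_inter_preimage (hI.preimage continuous_snd) (isOpen_Ioi (a := 0))

theorem contDiffOn_sqrt_sub_sq {I : Set ℝ} {n : WithTop ℕ∞} (hv : ContDiffOn ℝ n v I) :
    ContDiffOn ℝ n (fun p : ℝ × ℝ => √(v p.2 - p.1 ^ 2)) {p | p.2 ∈ I ∧ p.1 ^ 2 < v p.2} :=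
  ((hv.comp contDiff_snd.contDiffOn fun _ hq => hq.1).sub (by fun_prop)).sqrt
    fun _ hq => (sub_pos.mpr hq.2).ne'

theorem hasDerivAt_const_sub_sq (c x : ℝ) : HasDerivAt (fun y => c - y ^ 2) (-2 * x) x := by
  simpa [mul_comm] using (hasDerivAt_pow 2 x).const_sub c

variable {q : ℝ × ℝ} {a : ℝ}

theorem px_sqrt_sub_sq (hv : DifferentiableAt ℝ v q.2) (hq : q.1 ^ 2 < v q.2) :
    px (fun p : ℝ × ℝ => √(v p.2 - p.1 ^ 2)) q = -2 * q.1 / (2 * √(v q.2 - q.1 ^ 2)) :=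
  px_eq_of_hasDerivAt (((hv.comp q differentiableAt_snd).sub (by fun_prop)).sqrt
      (sub_pos.mpr hq).ne') (.of_forall fun _ => rfl)
    ((hasDerivAt_const_sub_sq _ _).sqrt (sub_pos.mpr hq).ne')

theorem pt_sqrt_sub_sq (hv : HasDerivAt v a q.2) (hq : q.1 ^ 2 < v q.2) :
    pt (fun p : ℝ × ℝ => √(v p.2 - p.1 ^ 2)) q = a / (2 * √(v q.2 - q.1 ^ 2)) :=
  pt_eq_of_hasDerivAt (((hv.differentiableAt.comp q differentiableAt_snd).sub (by fun_prop)).sqrt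
      (sub_pos.mpr hq).ne') (.of_forall fun _ => rfl) ((hv.sub_const _).sqrt (sub_pos.mpr hq).ne')

variable {I : Set ℝ} {p : ℝ × ℝ}

theorem px_px_sqrt_sub_sq (hI : IsOpen I) (hv : ContDiffOn ℝ 2 v I)
    (hp : p ∈ {p : ℝ × ℝ | p.2 ∈ I ∧ p.1 ^ 2 < v p.2}) :
    px (px fun p : ℝ × ℝ => √(v p.2 - p.1 ^ 2)) p =
      -2 / (2 * √(v p.2 - p.1 ^ 2)) - -2 * p.1 * (-2 * p.1) / (4 * √(v p.2 - p.1 ^ 2) ^ 3) :=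
  have hΩ := isOpen_setOf_sq_lt hI hv.continuousOn
  px_eq_of_hasDerivAt ((contDiffOn_sqrt_sub_sq hv).differentiableAt_fderiv_apply hΩ le_rfl hp _)
    ((hΩ.eventually_mk_left_mem hp).mono fun _ hx =>
      px_sqrt_sub_sq ((hv.hasDerivAt_deriv hI two_ne_zero hx.1).differentiableAt) hx.2)
    ((hasDerivAt_const_sub_sq _ _).div_two_sqrt
      (by simpa using (hasDerivAt_id p.1).const_mul (-2 : ℝ)) (sub_pos.mpr hp.2))

theorem px_pt_sqrt_sub_sq (hI : IsOpen I) (hv : ContDiffOn ℝ 2 v I)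
    (hp : p ∈ {p : ℝ × ℝ | p.2 ∈ I ∧ p.1 ^ 2 < v p.2}) :
    px (pt fun p : ℝ × ℝ => √(v p.2 - p.1 ^ 2)) p =
      0 / (2 * √(v p.2 - p.1 ^ 2)) - deriv v p.2 * (-2 * p.1) / (4 * √(v p.2 - p.1 ^ 2) ^ 3) :=
  have hΩ := isOpen_setOf_sq_lt hI hv.continuousOn
  px_eq_of_hasDerivAt ((contDiffOn_sqrt_sub_sq hv).differentiableAt_fderiv_apply hΩ le_rfl hp _)
    ((hΩ.eventually_mk_left_mem hp).mono fun _ hx =>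
      pt_sqrt_sub_sq (hv.hasDerivAt_deriv hI two_ne_zero hx.1) hx.2)
    ((hasDerivAt_const_sub_sq _ _).div_two_sqrt (hasDerivAt_const _ (deriv v p.2))
      (sub_pos.mpr hp.2))

theorem pt_pt_sqrt_sub_sq (hI : IsOpen I) (hv : ContDiffOn ℝ 2 v I)
    (hp : p ∈ {p : ℝ × ℝ | p.2 ∈ I ∧ p.1 ^ 2 < v p.2}) :
    pt (pt fun p : ℝ × ℝ => √(v p.2 - p.1 ^ 2)) p =
      deriv (deriv v) p.2 / (2 * √(v p.2 - p.1 ^ 2))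
        - deriv v p.2 * deriv v p.2 / (4 * √(v p.2 - p.1 ^ 2) ^ 3) :=
  have hΩ := isOpen_setOf_sq_lt hI hv.continuousOn
  pt_eq_of_hasDerivAt ((contDiffOn_sqrt_sub_sq hv).differentiableAt_fderiv_apply hΩ le_rfl hp _)
    ((hΩ.eventually_mk_right_mem hp).mono fun _ ht =>
      pt_sqrt_sub_sq (hv.hasDerivAt_deriv hI two_ne_zero ht.1) ht.2)
    (((hv.hasDerivAt_deriv hI two_ne_zero hp.1).sub_const _).div_two_sqrt
      ((hv.deriv_of_isOpen hI (m := 1) le_rfl).hasDerivAt_deriv hI one_ne_zero hp.1)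
      (sub_pos.mpr hp.2))

end SqrtProfile

theorem bornInfeld_reduction_rotation_general
    (I : Set ℝ) (hIopen : IsOpen I)
    (v : ℝ → ℝ) (hv : ContDiffOn ℝ 2 v I)
    (hode : ∀ t ∈ I, (deriv v t) ^ 2 - v t * deriv (deriv v) t - 2 * v t = 0) :
    IsBISolution (fun p : ℝ × ℝ => Real.sqrt (v p.2 - p.1 ^ 2))
      {p : ℝ × ℝ | p.2 ∈ I ∧ p.1 ^ 2 < v p.2} := by
  refine ⟨⟨_, isOpen_setOf_sq_lt hIopen hv.continuousOn, subset_rfl, contDiffOn_sqrt_sub_sq hv⟩,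
    fun p hp => ?_⟩
  have hv' := hv.hasDerivAt_deriv hIopen two_ne_zero hp.1
  have hw : 0 < v p.2 - p.1 ^ 2 := sub_pos.mpr hp.2
  have hS : √(v p.2 - p.1 ^ 2) ^ 2 + p.1 ^ 2 = v p.2 := by
    rw [Real.sq_sqrt hw.le]
    ring
  rw [px_sqrt_sub_sq hv'.differentiableAt hp.2, pt_sqrt_sub_sq hv' hp.2,
    px_px_sqrt_sub_sq hIopen hv hp, px_pt_sqrt_sub_sq hIopen hv hp, pt_pt_sqrt_sub_sq hIopen hv hp,
    bornInfeld_sqrt_identity (Real.sqrt_pos.mpr hw) hS, hode p.2 hp.1, zero_div]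

/-- Symmetry reduction by `v₅ = −u∂ₓ + x∂_u` with invariant `x² + u² = v(t)`:
if `v` solves `(v')² − v v'' − 2v = 0` on an open interval `I`, then
`u(x,t) = √(v(t) − x²)` solves the Born-Infeld equation on
`{(x,t) : t ∈ I ∧ x² < v(t)}`. -/
theorem bornInfeld_reduction_rotation
    (I : Set ℝ) (hIopen : IsOpen I) (hIinterval : I.OrdConnected)
    (v : ℝ → ℝ) (hv : ContDiffOn ℝ 2 v I)
    (hode : ∀ t ∈ I, (deriv v t) ^ 2 - v t * deriv (deriv v) t - 2 * v t = 0) :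
    IsBISolution (fun p : ℝ × ℝ => Real.sqrt (v p.2 - p.1 ^ 2))
      {p : ℝ × ℝ | p.2 ∈ I ∧ p.1 ^ 2 < v p.2} :=
  bornInfeld_reduction_rotation_general I hIopen v hv hode
end

section
/- Let I ⊆ ℝ be an open interval and let v : ℝ → ℝ be C² on I and satisfy v(x)·v''(x) − v'(x)² − 2·v(x) = 0 for all x ∈ I. Then the function u(x,t) = √(v(x) + t²) is a solution of the Born-Infeld equation on the open set Ω = {(x,t) ∈ ℝ² : x ∈ I and v(x) + t² > 0}. (This is the symmetry reduction by v₆ = u∂_t + t∂_u, with invariant −t² + u² = v(x).) -/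
open Filter Topology ContinuousLinearMap

section Sqrt

variable {E : Type*} [NormedAddCommGroup E] [NormedSpace ℝ E] {w : E → ℝ} {w' : E → E →L[ℝ] ℝ}
  {p : E}

theorem fderiv_sqrt_apply {L : E →L[ℝ] ℝ} (hw : HasFDerivAt w L p) (hp : w p ≠ 0) (a : E) :
    fderiv ℝ (fun q => √(w q)) p a = L a / (2 * √(w p)) := by
  rw [(hw.sqrt hp).fderiv, smul_apply, smul_eq_mul]
  ring

theorem fderiv_fderiv_sqrt_apply (hw : ∀ᶠ q in 𝓝 p, HasFDerivAt w (w' q) q) (hp : 0 < w p)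
    {a : E} {D : E →L[ℝ] ℝ} (hD : HasFDerivAt (fun q => w' q a) D p) (b : E) :
    fderiv ℝ (fun q => fderiv ℝ (fun q => √(w q)) q a) p b
      = D b / (2 * √(w p)) - w' p a * w' p b / (4 * √(w p) ^ 3) := by
  have hpos : ∀ᶠ q in 𝓝 p, 0 < w q :=
    hw.self_of_nhds.continuousAt.eventually (lt_mem_nhds hp)
  have hfirst : (fun q => fderiv ℝ (fun q => √(w q)) q a) =ᶠ[𝓝 p]
      fun q => w' q a * (2 * √(w q))⁻¹ := by
    filter_upwards [hw, hpos] with q hq hq0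
    rw [fderiv_sqrt_apply hq hq0.ne', div_eq_mul_inv]
  have hinv : HasFDerivAt (fun q => (2 * √(w q))⁻¹)
      (-((2 * √(w p)) ^ 2)⁻¹ • (2 : ℝ) • (1 / (2 * √(w p))) • w' p) p :=
    (hasDerivAt_inv (by positivity)).comp_hasFDerivAt p
      ((hw.self_of_nhds.sqrt hp.ne').const_mul 2)
  rw [hfirst.fderiv_eq, (hD.fun_mul hinv).fderiv]
  simp only [add_apply, smul_apply, smul_eq_mul]
  field_simp
  ring

end Sqrt

theorem eventually_hasFDerivAt_comp_fst_add_sq {v : ℝ → ℝ} {I : Set ℝ} (hI : IsOpen I)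
    (hv : DifferentiableOn ℝ v I) {p : ℝ × ℝ} (hp : p.1 ∈ I) :
    ∀ᶠ q in 𝓝 p, HasFDerivAt (fun q : ℝ × ℝ => v q.1 + q.2 ^ 2)
      (deriv v q.1 • fst ℝ ℝ ℝ + (2 * q.2) • snd ℝ ℝ ℝ) q := by
  filter_upwards [(hI.preimage continuous_fst).mem_nhds hp] with q hq
  have hvq := (hv.differentiableAt (hI.mem_nhds hq)).hasDerivAt
  simpa using (hvq.comp_hasFDerivAt q hasFDerivAt_fst).fun_add
    ((hasDerivAt_pow 2 q.2).comp_hasFDerivAt q hasFDerivAt_snd)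

theorem bornInfeld_lhs_sqrt_eq {s wx wt wxx wxt wtt : ℝ} (hs : 0 < s) :
    (1 - (wt / (2 * s)) ^ 2) * (wxx / (2 * s) - wx * wx / (4 * s ^ 3))
        + 2 * (wx / (2 * s)) * (wt / (2 * s)) * (wxt / (2 * s) - wt * wx / (4 * s ^ 3))
        - (1 + (wx / (2 * s)) ^ 2) * (wtt / (2 * s) - wt * wt / (4 * s ^ 3))
      = ((4 * s ^ 2 - wt ^ 2) * wxx + 2 * wx * wt * wxt - (4 * s ^ 2 + wx ^ 2) * wtt
          + 2 * (wt ^ 2 - wx ^ 2)) / (8 * s ^ 3) := by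
  field_simp
  ring

theorem bornInfeld_reduction_hyperbolic_general
    (I : Set ℝ) (hIopen : IsOpen I)
    (v : ℝ → ℝ) (hv : ContDiffOn ℝ 2 v I)
    (hode : ∀ x ∈ I, v x * deriv (deriv v) x - (deriv v x) ^ 2 - 2 * v x = 0) :
    IsBISolution (fun p : ℝ × ℝ => Real.sqrt (v p.1 + p.2 ^ 2))
      {p : ℝ × ℝ | p.1 ∈ I ∧ v p.1 + p.2 ^ 2 > 0} := by
  have hwS : ContDiffOn ℝ 2 (fun q : ℝ × ℝ => v q.1 + q.2 ^ 2) (Prod.fst ⁻¹' I) :=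
    (hv.comp contDiff_fst.contDiffOn fun _ hq => hq).add (contDiff_snd.pow 2).contDiffOn
  have hΩ : IsOpen {p : ℝ × ℝ | p.1 ∈ I ∧ v p.1 + p.2 ^ 2 > 0} :=
    hwS.continuousOn.isOpen_inter_preimage (hIopen.preimage continuous_fst) isOpen_Ioi
  refine ⟨⟨_, hΩ, subset_rfl, (hwS.mono fun _ hq => hq.1).sqrt fun _ hq => hq.2.ne'⟩, ?_⟩
  rintro p ⟨hpI, hpos⟩
  have hw := eventually_hasFDerivAt_comp_fst_add_sq hIopen (hv.differentiableOn two_ne_zero) hpI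
  have hv'' : HasDerivAt (deriv v) (deriv (deriv v) p.1) p.1 :=
    (((hv.deriv_of_isOpen (m := 1) hIopen le_rfl).contDiffAt
      (hIopen.mem_nhds hpI)).differentiableAt one_ne_zero).hasDerivAt
  set w' : ℝ × ℝ → ℝ × ℝ →L[ℝ] ℝ := fun q => deriv v q.1 • fst ℝ ℝ ℝ + (2 * q.2) • snd ℝ ℝ ℝ
  have hDx : HasFDerivAt (fun q => w' q (1, 0)) (deriv (deriv v) p.1 • fst ℝ ℝ ℝ) p := by
    simpa [w', Function.comp_def] using hv''.comp_hasFDerivAt p hasFDerivAt_fst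
  have hDt : HasFDerivAt (fun q => w' q (0, 1)) ((2 : ℝ) • snd ℝ ℝ ℝ) p := by
    simpa [w'] using (hasFDerivAt_snd (𝕜 := ℝ) (E := ℝ) (F := ℝ) (p := p)).const_mul 2
  unfold px pt
  rw [fderiv_sqrt_apply hw.self_of_nhds hpos.ne', fderiv_sqrt_apply hw.self_of_nhds hpos.ne',
    fderiv_fderiv_sqrt_apply hw hpos hDx, fderiv_fderiv_sqrt_apply hw hpos hDt,
    fderiv_fderiv_sqrt_apply hw hpos hDt, bornInfeld_lhs_sqrt_eq (Real.sqrt_pos.2 hpos)]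
  refine div_eq_zero_iff.2 (Or.inl ?_)
  simp only [Real.sq_sqrt hpos.le, add_apply, smul_apply, coe_fst', coe_snd', smul_eq_mul,
    mul_zero, mul_one, zero_add, add_zero]
  linear_combination 4 * hode p.1 hpI

/-- Symmetry reduction by `v₆ = u∂_t + t∂_u` with invariant `−t² + u² = v(x)`:
if `v` solves `v v'' − (v')² − 2v = 0` on an open interval `I`, then
`u(x,t) = √(v(x) + t²)` solves the Born-Infeld equation on
`{(x,t) : x ∈ I ∧ v(x) + t² > 0}`. -/
theorem bornInfeld_reduction_hyperbolic
    (I : Set ℝ) (hIopen : IsOpen I) (hIinterval : I.OrdConnected)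
    (v : ℝ → ℝ) (hv : ContDiffOn ℝ 2 v I)
    (hode : ∀ x ∈ I, v x * deriv (deriv v) x - (deriv v x) ^ 2 - 2 * v x = 0) :
    IsBISolution (fun p : ℝ × ℝ => Real.sqrt (v p.1 + p.2 ^ 2))
      {p : ℝ × ℝ | p.1 ∈ I ∧ v p.1 + p.2 ^ 2 > 0} :=
  bornInfeld_reduction_hyperbolic_general I hIopen v hv hode
end

section
/- Let c₁ ≠ 0 and c₂ be real constants, and define R(x,t) = 2c₁·e^{−(t+c₂)/c₁} + 8c₁³·e^{(t+c₂)/c₁} − 4x² − 8c₁². Then the function u(x,t) = (1/2)·√(R(x,t)) is a solution of the Born-Infeld equation on the open set Ω = {(x,t) ∈ ℝ² : R(x,t) > 0}. (This is the second family of group-invariant solutions associated to the rotation symmetry v₅ = −u∂_x + x∂_u.) -/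
/-!
Writing `u = ½√R`, a direct chain-rule computation gives
`BI(u) = K(R) / (64 R^{3/2})` with `K` a second-order polynomial operator in `R`
(`radicandOperator`), so `u` solves the Born-Infeld equation wherever `R > 0` and `K(R) = 0`.
For a rotation-invariant radicand `R = k(t) - 4x²` the `x`-dependence of `K(R)` cancels and
`K(R) = 16 (k'² - k k'' - 8k)`. With `s = (t + c₂)/c₁`, the profile
`k = 2c₁e^{-s} + 8c₁³e^{s} - 8c₁²` solves this ODE because `e^{-s} e^{s} = 1`.
-/

open Topology

section HalfSqrt

variable {E : Type*} [NormedAddCommGroup E] [NormedSpace ℝ E] {R : E → ℝ} {p : E}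

theorem fderiv_half_sqrt_apply (hR : DifferentiableAt ℝ R p) (hp : R p ≠ 0) (v : E) :
    fderiv ℝ (fun q => 1 / 2 * √(R q)) p v = fderiv ℝ R p v / (4 * √(R p)) := by
  rw [((hR.hasFDerivAt.sqrt hp).const_mul (1 / 2)).fderiv]
  simp only [smul_apply, smul_eq_mul]
  field_simp
  ring

theorem fderiv_fderiv_half_sqrt_apply (hR : ContDiff ℝ 2 R) (hp : 0 < R p) (v w : E) :
    fderiv ℝ (fun q => fderiv ℝ (fun q => 1 / 2 * √(R q)) q v) p w =
      (2 * R p * fderiv ℝ (fun q => fderiv ℝ R q v) p w - fderiv ℝ R p v * fderiv ℝ R p w) /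
        (8 * √(R p) ^ 3) := by
  have hR1 : Differentiable ℝ R := hR.differentiable (by norm_num)
  have hnear : (fun q => fderiv ℝ (fun q => 1 / 2 * √(R q)) q v) =ᶠ[𝓝 p]
      fun q => fderiv ℝ R q v * (4 * √(R q))⁻¹ := by
    filter_upwards [continuousAt_const.eventually_lt hR.continuous.continuousAt hp] with q hq
    rw [fderiv_half_sqrt_apply (hR1 q) (ne_of_gt hq), div_eq_mul_inv]
  have hRv : HasFDerivAt (fun q => fderiv ℝ R q v) (fderiv ℝ (fun q => fderiv ℝ R q v) p) p :=
    (((hR.fderiv_right (m := 1) (by norm_num)).differentiable (by norm_num) p).clm_apply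
      (differentiableAt_const v)).hasFDerivAt
  have hinv : HasFDerivAt (fun q => (4 * √(R q))⁻¹) _ p :=
    (hasDerivAt_inv (by positivity)).comp_hasFDerivAt p
      (((hR1 p).hasFDerivAt.sqrt hp.ne').const_mul 4)
  rw [hnear.fderiv_eq, (hRv.fun_mul hinv).fderiv]
  simp only [add_apply, smul_apply, smul_eq_mul]
  have hsq : √(R p) ^ 2 = R p := Real.sq_sqrt hp.le
  field_simp
  rw [hsq]
  ring

end HalfSqrt

noncomputable def biOperator (u : ℝ × ℝ → ℝ) (p : ℝ × ℝ) : ℝ :=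
  (1 - pt u p ^ 2) * px (px u) p + 2 * px u p * pt u p * px (pt u) p
    - (1 + px u p ^ 2) * pt (pt u) p

noncomputable def radicandOperator (R : ℝ × ℝ → ℝ) (p : ℝ × ℝ) : ℝ :=
  16 * R p * (px (px R) p - pt (pt R) p) + 8 * (pt R p ^ 2 - px R p ^ 2)
    - pt R p ^ 2 * px (px R) p + 2 * px R p * pt R p * px (pt R) p - px R p ^ 2 * pt (pt R) p

section HalfSqrtSolution

variable {R : ℝ × ℝ → ℝ} {p : ℝ × ℝ}

theorem biOperator_half_sqrt (hR : ContDiff ℝ 2 R) (hp : 0 < R p) :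
    biOperator (fun q => 1 / 2 * √(R q)) p = radicandOperator R p / (64 * √(R p) ^ 3) := by
  have hR1 : DifferentiableAt ℝ R p := hR.differentiable (by norm_num) p
  have hx : px (fun q => 1 / 2 * √(R q)) p = px R p / (4 * √(R p)) :=
    fderiv_half_sqrt_apply hR1 hp.ne' _
  have ht : pt (fun q => 1 / 2 * √(R q)) p = pt R p / (4 * √(R p)) :=
    fderiv_half_sqrt_apply hR1 hp.ne' _
  have hxx : px (px fun q => 1 / 2 * √(R q)) p =
      (2 * R p * px (px R) p - px R p * px R p) / (8 * √(R p) ^ 3) :=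
    fderiv_fderiv_half_sqrt_apply hR hp _ _
  have hxt : px (pt fun q => 1 / 2 * √(R q)) p =
      (2 * R p * px (pt R) p - pt R p * px R p) / (8 * √(R p) ^ 3) :=
    fderiv_fderiv_half_sqrt_apply hR hp _ _
  have htt : pt (pt fun q => 1 / 2 * √(R q)) p =
      (2 * R p * pt (pt R) p - pt R p * pt R p) / (8 * √(R p) ^ 3) :=
    fderiv_fderiv_half_sqrt_apply hR hp _ _
  have hsq : √(R p) ^ 2 = R p := Real.sq_sqrt hp.le
  rw [biOperator, radicandOperator, hx, ht, hxx, hxt, htt]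
  field_simp
  rw [hsq]
  ring

theorem isBISolution_half_sqrt (hR : ContDiff ℝ 2 R)
    (hrad : ∀ p, 0 < R p → radicandOperator R p = 0) :
    IsBISolution (fun q => 1 / 2 * √(R q)) {p | 0 < R p} := by
  refine ⟨⟨_, isOpen_lt continuous_const hR.continuous, subset_rfl, fun q hq => ?_⟩, fun p hp => ?_⟩
  · exact (contDiffAt_const.mul
      ((Real.contDiffAt_sqrt (ne_of_gt hq)).comp q hR.contDiffAt)).contDiffWithinAt
  · change biOperator _ p = 0
    rw [biOperator_half_sqrt hR hp, hrad p hp, zero_div]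

end HalfSqrtSolution

/-- `u = ½√(k t - 4x²)` means `x² + u² = k t / 4`: the level sets are orbits of the rotation
`v₅` of the `(x, u)`-plane. -/
def rotRadicand (k : ℝ → ℝ) (q : ℝ × ℝ) : ℝ := k q.2 - 4 * q.1 ^ 2

section RotRadicand

variable {k : ℝ → ℝ}

theorem hasFDerivAt_comp_fst {g : ℝ → ℝ} {q : ℝ × ℝ} (hg : DifferentiableAt ℝ g q.1) :
    HasFDerivAt (fun q : ℝ × ℝ => g q.1) (deriv g q.1 • ContinuousLinearMap.fst ℝ ℝ ℝ) q :=
  hg.hasDerivAt.comp_hasFDerivAt q hasFDerivAt_fst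

theorem hasFDerivAt_comp_snd {g : ℝ → ℝ} {q : ℝ × ℝ} (hg : DifferentiableAt ℝ g q.2) :
    HasFDerivAt (fun q : ℝ × ℝ => g q.2) (deriv g q.2 • ContinuousLinearMap.snd ℝ ℝ ℝ) q :=
  hg.hasDerivAt.comp_hasFDerivAt q hasFDerivAt_snd

theorem contDiff_rotRadicand (hk : ContDiff ℝ 2 k) : ContDiff ℝ 2 (rotRadicand k) := by
  unfold rotRadicand
  fun_prop

theorem radicandOperator_rotRadicand (hk : ContDiff ℝ 2 k) (p : ℝ × ℝ) :
    radicandOperator (rotRadicand k) p =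
      16 * (deriv k p.2 ^ 2 - k p.2 * deriv (deriv k) p.2 - 8 * k p.2) := by
  have hk1 : Differentiable ℝ k := hk.differentiable (by norm_num)
  have hk2 : Differentiable ℝ (deriv k) := hk.differentiable_deriv_two
  have hsq : Differentiable ℝ fun x : ℝ => 4 * x ^ 2 := by fun_prop
  have hfd (q : ℝ × ℝ) : fderiv ℝ (rotRadicand k) q =
      deriv k q.2 • ContinuousLinearMap.snd ℝ ℝ ℝ - (8 * q.1) • ContinuousLinearMap.fst ℝ ℝ ℝ := by
    have : HasFDerivAt (rotRadicand k) _ q :=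
      (hasFDerivAt_comp_snd (hk1 q.2)).fun_sub (hasFDerivAt_comp_fst (hsq q.1))
    rw [this.fderiv]
    simp only [deriv_const_mul_field', deriv_pow_field, Nat.cast_ofNat]
    ring_nf
  have hx : px (rotRadicand k) = fun q => -8 * q.1 := by
    funext q; simp [px, hfd]
  have ht : pt (rotRadicand k) = fun q => deriv k q.2 := by
    funext q; simp [pt, hfd]
  have hxx : fderiv ℝ (fun q : ℝ × ℝ => -8 * q.1) p = (-8 : ℝ) • ContinuousLinearMap.fst ℝ ℝ ℝ := by
    simpa using (hasFDerivAt_comp_fst (g := fun x => -8 * x) (by fun_prop)).fderiv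
  simp only [radicandOperator, hx, ht, px, pt, (hasFDerivAt_comp_snd (hk2 p.2)).fderiv, hxx, hfd]
  simp only [rotRadicand, smul_apply, ContinuousLinearMap.coe_fst', ContinuousLinearMap.coe_snd',
    smul_eq_mul, sub_apply, mul_one, mul_zero, sub_zero, zero_sub]
  ring

end RotRadicand

noncomputable def v5Profile (c₁ c₂ t : ℝ) : ℝ :=
  2 * c₁ * Real.exp (-((t + c₂) / c₁)) + 8 * c₁ ^ 3 * Real.exp ((t + c₂) / c₁) - 8 * c₁ ^ 2

section V5Profile

variable {c₁ : ℝ} (c₂ : ℝ)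

theorem hasDerivAt_exp_combination (a b t : ℝ) :
    HasDerivAt (fun t => a * Real.exp (-((t + c₂) / c₁)) + b * Real.exp ((t + c₂) / c₁))
      ((-a * Real.exp (-((t + c₂) / c₁)) + b * Real.exp ((t + c₂) / c₁)) / c₁) t := by
  have hs : HasDerivAt (fun t => (t + c₂) / c₁) (1 / c₁) t :=
    ((hasDerivAt_id t).add_const c₂).div_const c₁
  have h : HasDerivAt (fun t => a * Real.exp (-((t + c₂) / c₁)) + b * Real.exp ((t + c₂) / c₁))
      _ t := (hs.fun_neg.exp.const_mul a).add (hs.exp.const_mul b)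
  convert h using 1
  ring

theorem deriv_v5Profile (hc₁ : c₁ ≠ 0) :
    deriv (v5Profile c₁ c₂) = fun t =>
      -2 * Real.exp (-((t + c₂) / c₁)) + 8 * c₁ ^ 2 * Real.exp ((t + c₂) / c₁) := by
  funext t
  have h : HasDerivAt (v5Profile c₁ c₂) _ t :=
    (hasDerivAt_exp_combination c₂ (2 * c₁) (8 * c₁ ^ 3) t).sub_const (8 * c₁ ^ 2)
  rw [h.deriv]
  field_simp

theorem deriv_deriv_v5Profile (hc₁ : c₁ ≠ 0) :
    deriv (deriv (v5Profile c₁ c₂)) = fun t =>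
      (2 * Real.exp (-((t + c₂) / c₁)) + 8 * c₁ ^ 2 * Real.exp ((t + c₂) / c₁)) / c₁ := by
  rw [deriv_v5Profile c₂ hc₁]
  funext t
  rw [(hasDerivAt_exp_combination c₂ (-2) (8 * c₁ ^ 2) t).deriv]
  ring

theorem v5Profile_ode (hc₁ : c₁ ≠ 0) (t : ℝ) :
    deriv (v5Profile c₁ c₂) t ^ 2 - v5Profile c₁ c₂ t * deriv (deriv (v5Profile c₁ c₂)) t
      - 8 * v5Profile c₁ c₂ t = 0 := by
  have hAB : Real.exp (-((t + c₂) / c₁)) * Real.exp ((t + c₂) / c₁) = 1 := by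
    rw [← Real.exp_add, neg_add_cancel, Real.exp_zero]
  rw [deriv_deriv_v5Profile c₂ hc₁, deriv_v5Profile c₂ hc₁, v5Profile]
  field_simp
  linear_combination (-64 * c₁ ^ 2) * hAB

theorem contDiff_v5Profile : ContDiff ℝ 2 (v5Profile c₁ c₂) := by
  unfold v5Profile
  fun_prop

end V5Profile

/-- Second group-invariant solution associated to the rotation symmetry
`v₅ = −u∂ₓ + x∂_u`:
`u = ½√(2c₁ e^{−(t+c₂)/c₁} + 8c₁³ e^{(t+c₂)/c₁} − 4x² − 8c₁²)`. -/
theorem bornInfeld_invariant_solution_v5_second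
    (c₁ c₂ : ℝ) (hc₁ : c₁ ≠ 0) :
    IsBISolution
      (fun p : ℝ × ℝ => (1 / 2) * Real.sqrt
        (2 * c₁ * Real.exp (-((p.2 + c₂) / c₁)) + 8 * c₁ ^ 3 * Real.exp ((p.2 + c₂) / c₁)
          - 4 * p.1 ^ 2 - 8 * c₁ ^ 2))
      {p : ℝ × ℝ |
        2 * c₁ * Real.exp (-((p.2 + c₂) / c₁)) + 8 * c₁ ^ 3 * Real.exp ((p.2 + c₂) / c₁)
          - 4 * p.1 ^ 2 - 8 * c₁ ^ 2 > 0} := by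
  have hk := contDiff_v5Profile (c₁ := c₁) c₂
  have h := isBISolution_half_sqrt (contDiff_rotRadicand hk) fun p _ => by
    rw [radicandOperator_rotRadicand hk, v5Profile_ode c₂ hc₁, mul_zero]
  convert h using 4 <;> simp only [rotRadicand, v5Profile] <;> ring_nf
end

section
/- Let c₁ ≠ 0 and c₂ be real constants, and define R(x,t) = 2c₁·e^{(x+c₂)/c₁} + 8c₁³·e^{−(x+c₂)/c₁} + 4t² + 8c₁². Then the function u(x,t) = (1/2)·√(R(x,t)) is a solution of the Born-Infeld equation on the open set Ω = {(x,t) ∈ ℝ² : R(x,t) > 0}. (This is the group-invariant solution associated to the hyperbolic rotation symmetry v₆ = u∂_t + t∂_u.) -/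
/-!
The symmetry `v₆ = u ∂_t + t ∂_u` is a hyperbolic rotation of the `(t, u)`-plane with invariants
`x` and `u² - t²`, so invariant solutions have the form `u = √(ψ x + t²)`. For such `u` the
Born-Infeld expression equals `(ψ ψ'' - ψ'² - 2ψ) / (2u³)`, so the equation reduces to the ODE
`ψ ψ'' = ψ'² + 2ψ`. Its solution `ψ = c₁/2 e^s + 2c₁³ e^{-s} + 2c₁²`, `s = (x + c₂)/c₁`, gives the
theorem, since `R = 4 (ψ x + t²)`.
-/

open Filter Topology

section PartialDerivatives

variable {u v : ℝ × ℝ → ℝ} {p : ℝ × ℝ} {a : ℝ}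

theorem px_eq_of_hasDerivAt_s12 (hu : DifferentiableAt ℝ u p)
    (h : HasDerivAt (fun x => u (x, p.2)) a p.1) : px u p = a :=
  (hu.hasFDerivAt.comp_hasDerivAt p.1
    ((hasDerivAt_id p.1).prodMk (hasDerivAt_const p.1 p.2))).unique h

theorem pt_eq_of_hasDerivAt_s12 (hu : DifferentiableAt ℝ u p)
    (h : HasDerivAt (fun t => u (p.1, t)) a p.2) : pt u p = a :=
  (hu.hasFDerivAt.comp_hasDerivAt p.2
    ((hasDerivAt_const p.2 p.1).prodMk (hasDerivAt_id p.2))).unique h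

theorem px_congr (h : u =ᶠ[𝓝 p] v) : px u p = px v p := by
  simp only [px, h.fderiv_eq]

theorem pt_congr (h : u =ᶠ[𝓝 p] v) : pt u p = pt v p := by
  simp only [pt, h.fderiv_eq]

end PartialDerivatives

noncomputable def hyperbolicAnsatz (ψ : ℝ → ℝ) (p : ℝ × ℝ) : ℝ := √(ψ p.1 + p.2 ^ 2)

namespace hyperbolicAnsatz

variable {ψ : ℝ → ℝ} {p : ℝ × ℝ}

theorem isOpen_domain (hψ : Continuous ψ) : IsOpen {p : ℝ × ℝ | 0 < ψ p.1 + p.2 ^ 2} :=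
  isOpen_lt continuous_const (by fun_prop)

theorem contDiffOn (hψ : ContDiff ℝ 2 ψ) :
    ContDiffOn ℝ 2 (hyperbolicAnsatz ψ) {p | 0 < ψ p.1 + p.2 ^ 2} := fun p hp =>
  ((Real.contDiffAt_sqrt (ne_of_gt hp)).comp p (by fun_prop)).contDiffWithinAt

theorem pos (hp : 0 < ψ p.1 + p.2 ^ 2) : 0 < hyperbolicAnsatz ψ p := Real.sqrt_pos.2 hp

theorem sq (hp : 0 < ψ p.1 + p.2 ^ 2) : hyperbolicAnsatz ψ p ^ 2 = ψ p.1 + p.2 ^ 2 :=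
  Real.sq_sqrt hp.le

theorem differentiableAt (hψ : Differentiable ℝ ψ) (hp : 0 < ψ p.1 + p.2 ^ 2) :
    DifferentiableAt ℝ (hyperbolicAnsatz ψ) p :=
  ((hψ.comp differentiable_fst).add (differentiable_snd.pow 2)).differentiableAt.sqrt hp.ne'

theorem hasDerivAt_fst (hψ : Differentiable ℝ ψ) (hp : 0 < ψ p.1 + p.2 ^ 2) :
    HasDerivAt (fun x => hyperbolicAnsatz ψ (x, p.2))
      (deriv ψ p.1 / (2 * hyperbolicAnsatz ψ p)) p.1 :=
  ((hψ p.1).hasDerivAt.add_const _).sqrt hp.ne'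

theorem hasDerivAt_snd (hp : 0 < ψ p.1 + p.2 ^ 2) :
    HasDerivAt (fun t => hyperbolicAnsatz ψ (p.1, t)) (p.2 / hyperbolicAnsatz ψ p) p.2 := by
  refine (((hasDerivAt_pow 2 p.2).const_add (ψ p.1)).sqrt hp.ne').congr_deriv ?_
  simp only [hyperbolicAnsatz]
  field_simp
  norm_num

theorem px_eq (hψ : Differentiable ℝ ψ) (hp : 0 < ψ p.1 + p.2 ^ 2) :
    px (hyperbolicAnsatz ψ) p = deriv ψ p.1 / (2 * hyperbolicAnsatz ψ p) :=
  px_eq_of_hasDerivAt_s12 (differentiableAt hψ hp) (hasDerivAt_fst hψ hp)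

theorem pt_eq (hψ : Differentiable ℝ ψ) (hp : 0 < ψ p.1 + p.2 ^ 2) :
    pt (hyperbolicAnsatz ψ) p = p.2 / hyperbolicAnsatz ψ p :=
  pt_eq_of_hasDerivAt_s12 (differentiableAt hψ hp) (hasDerivAt_snd hp)

theorem px_px_eq (hψ : ContDiff ℝ 2 ψ) (hp : 0 < ψ p.1 + p.2 ^ 2) :
    px (px (hyperbolicAnsatz ψ)) p = deriv (deriv ψ) p.1 / (2 * hyperbolicAnsatz ψ p)
      - deriv ψ p.1 ^ 2 / (4 * hyperbolicAnsatz ψ p ^ 3) := by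
  have hψ₁ : Differentiable ℝ ψ := hψ.differentiable two_ne_zero
  have hψ₂ : Differentiable ℝ (deriv ψ) := (hψ.deriv' (n := 1)).differentiable one_ne_zero
  have hu := pos hp
  have hG : px (hyperbolicAnsatz ψ) =ᶠ[𝓝 p] fun q => deriv ψ q.1 / (2 * hyperbolicAnsatz ψ q) :=
    eventually_of_mem ((isOpen_domain hψ.continuous).mem_nhds hp) fun q hq => px_eq hψ₁ hq
  have hG_diff : DifferentiableAt ℝ (fun q => deriv ψ q.1 / (2 * hyperbolicAnsatz ψ q)) p := by
    simp only [div_eq_mul_inv]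
    have := differentiableAt hψ₁ hp
    fun_prop (disch := positivity)
  rw [px_congr hG]
  refine px_eq_of_hasDerivAt_s12 hG_diff
    (((hψ₂ p.1).hasDerivAt.div ((hasDerivAt_fst hψ₁ hp).const_mul 2)
      (mul_pos two_pos hu).ne').congr_deriv ?_)
  field_simp
  ring

theorem pt_eventuallyEq (hψ : Differentiable ℝ ψ) (hp : 0 < ψ p.1 + p.2 ^ 2) :
    pt (hyperbolicAnsatz ψ) =ᶠ[𝓝 p] fun q => q.2 / hyperbolicAnsatz ψ q :=
  eventually_of_mem ((isOpen_domain hψ.continuous).mem_nhds hp) fun _ hq => pt_eq hψ hq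

theorem differentiableAt_snd_div (hψ : Differentiable ℝ ψ) (hp : 0 < ψ p.1 + p.2 ^ 2) :
    DifferentiableAt ℝ (fun q => q.2 / hyperbolicAnsatz ψ q) p := by
  simp only [div_eq_mul_inv]
  have := differentiableAt hψ hp
  have := pos hp
  fun_prop (disch := positivity)

theorem px_pt_eq (hψ : Differentiable ℝ ψ) (hp : 0 < ψ p.1 + p.2 ^ 2) :
    px (pt (hyperbolicAnsatz ψ)) p = -(p.2 * deriv ψ p.1) / (2 * hyperbolicAnsatz ψ p ^ 3) := by
  rw [px_congr (pt_eventuallyEq hψ hp)]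
  refine px_eq_of_hasDerivAt_s12 (differentiableAt_snd_div hψ hp)
    (((hasDerivAt_const p.1 p.2).div (hasDerivAt_fst hψ hp) (pos hp).ne').congr_deriv ?_)
  have := pos hp
  field_simp
  ring

theorem pt_pt_eq (hψ : Differentiable ℝ ψ) (hp : 0 < ψ p.1 + p.2 ^ 2) :
    pt (pt (hyperbolicAnsatz ψ)) p = ψ p.1 / hyperbolicAnsatz ψ p ^ 3 := by
  rw [pt_congr (pt_eventuallyEq hψ hp)]
  refine pt_eq_of_hasDerivAt_s12 (differentiableAt_snd_div hψ hp)
    (((hasDerivAt_id' p.2).div (hasDerivAt_snd hp) (pos hp).ne').congr_deriv ?_)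
  have := pos hp
  field_simp
  linear_combination sq hp

end hyperbolicAnsatz

theorem bornInfeld_hyperbolicAnsatz_identity {ψ ψ' ψ'' t g : ℝ} (hg : g ≠ 0)
    (hsq : g ^ 2 = ψ + t ^ 2) :
    (1 - (t / g) ^ 2) * (ψ'' / (2 * g) - ψ' ^ 2 / (4 * g ^ 3))
      + 2 * (ψ' / (2 * g)) * (t / g) * (-(t * ψ') / (2 * g ^ 3))
      - (1 + (ψ' / (2 * g)) ^ 2) * (ψ / g ^ 3)
      = (ψ * ψ'' - (ψ' ^ 2 + 2 * ψ)) / (2 * g ^ 3) := by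
  obtain rfl : ψ = g ^ 2 - t ^ 2 := by linarith
  field_simp
  ring

theorem isBISolution_hyperbolicAnsatz {ψ : ℝ → ℝ} (hψ : ContDiff ℝ 2 ψ)
    (hode : ∀ x, ψ x * deriv (deriv ψ) x = deriv ψ x ^ 2 + 2 * ψ x) :
    IsBISolution (hyperbolicAnsatz ψ) {p | 0 < ψ p.1 + p.2 ^ 2} := by
  refine ⟨⟨_, hyperbolicAnsatz.isOpen_domain hψ.continuous, subset_rfl,
    hyperbolicAnsatz.contDiffOn hψ⟩, fun p hp => ?_⟩
  have hψ₁ : Differentiable ℝ ψ := hψ.differentiable two_ne_zero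
  rw [hyperbolicAnsatz.px_eq hψ₁ hp, hyperbolicAnsatz.pt_eq hψ₁ hp,
    hyperbolicAnsatz.px_px_eq hψ hp, hyperbolicAnsatz.px_pt_eq hψ₁ hp,
    hyperbolicAnsatz.pt_pt_eq hψ₁ hp,
    bornInfeld_hyperbolicAnsatz_identity (hyperbolicAnsatz.pos hp).ne' (hyperbolicAnsatz.sq hp),
    hode, sub_self, zero_div]

noncomputable def v6Profile (c₁ c₂ x : ℝ) : ℝ :=
  c₁ / 2 * Real.exp ((x + c₂) / c₁) + 2 * c₁ ^ 3 * Real.exp (-((x + c₂) / c₁)) + 2 * c₁ ^ 2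

section v6Profile

variable {c₁ : ℝ} (c₂ : ℝ)

theorem hasDerivAt_add_div (c x : ℝ) :
    HasDerivAt (fun x => (x + c₂) / c) c⁻¹ x := by
  simpa using ((hasDerivAt_id' x).add_const c₂).div_const c

theorem contDiff_v6Profile : ContDiff ℝ 2 (v6Profile c₁ c₂) := by
  unfold v6Profile
  fun_prop

theorem hasDerivAt_v6Profile (hc₁ : c₁ ≠ 0) (x : ℝ) :
    HasDerivAt (v6Profile c₁ c₂)
      (Real.exp ((x + c₂) / c₁) / 2 - 2 * c₁ ^ 2 * Real.exp (-((x + c₂) / c₁))) x := by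
  have hs := hasDerivAt_add_div c₂ c₁ x
  refine (((hs.exp.const_mul (c₁ / 2)).add (hs.fun_neg.exp.const_mul (2 * c₁ ^ 3))).add_const
    (2 * c₁ ^ 2)).congr_deriv ?_
  field_simp
  ring

theorem hasDerivAt_deriv_v6Profile (hc₁ : c₁ ≠ 0) (x : ℝ) :
    HasDerivAt (deriv (v6Profile c₁ c₂))
      (Real.exp ((x + c₂) / c₁) / (2 * c₁) + 2 * c₁ * Real.exp (-((x + c₂) / c₁))) x := by
  have hs := hasDerivAt_add_div c₂ c₁ x
  rw [funext fun y => (hasDerivAt_v6Profile c₂ hc₁ y).deriv]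
  refine ((hs.exp.div_const 2).sub (hs.fun_neg.exp.const_mul (2 * c₁ ^ 2))).congr_deriv ?_
  field_simp
  ring

theorem v6Profile_ode (hc₁ : c₁ ≠ 0) (x : ℝ) :
    v6Profile c₁ c₂ x * deriv (deriv (v6Profile c₁ c₂)) x
      = deriv (v6Profile c₁ c₂) x ^ 2 + 2 * v6Profile c₁ c₂ x := by
  rw [(hasDerivAt_deriv_v6Profile c₂ hc₁ x).deriv, (hasDerivAt_v6Profile c₂ hc₁ x).deriv,
    v6Profile, Real.exp_neg]
  have := Real.exp_pos ((x + c₂) / c₁)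
  field_simp
  ring

end v6Profile

/-- Group-invariant solution associated to the hyperbolic rotation symmetry
`v₆ = u∂_t + t∂_u`:
`u = ½√(2c₁ e^{(x+c₂)/c₁} + 8c₁³ e^{−(x+c₂)/c₁} + 4t² + 8c₁²)`. -/
theorem bornInfeld_invariant_solution_v6
    (c₁ c₂ : ℝ) (hc₁ : c₁ ≠ 0) :
    IsBISolution
      (fun p : ℝ × ℝ => (1 / 2) * Real.sqrt
        (2 * c₁ * Real.exp ((p.1 + c₂) / c₁) + 8 * c₁ ^ 3 * Real.exp (-((p.1 + c₂) / c₁))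
          + 4 * p.2 ^ 2 + 8 * c₁ ^ 2))
      {p : ℝ × ℝ |
        2 * c₁ * Real.exp ((p.1 + c₂) / c₁) + 8 * c₁ ^ 3 * Real.exp (-((p.1 + c₂) / c₁))
          + 4 * p.2 ^ 2 + 8 * c₁ ^ 2 > 0} := by
  have hR : ∀ p : ℝ × ℝ, 2 * c₁ * Real.exp ((p.1 + c₂) / c₁)
      + 8 * c₁ ^ 3 * Real.exp (-((p.1 + c₂) / c₁)) + 4 * p.2 ^ 2 + 8 * c₁ ^ 2
      = 2 ^ 2 * (v6Profile c₁ c₂ p.1 + p.2 ^ 2) := fun p => by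
    unfold v6Profile
    ring
  convert isBISolution_hyperbolicAnsatz (contDiff_v6Profile c₂) (v6Profile_ode c₂ hc₁) using 1
  · ext p
    rw [hR, Real.sqrt_mul (sq_nonneg 2), Real.sqrt_sq zero_le_two, hyperbolicAnsatz]
    ring
  · ext p
    simp only [Set.mem_ofPred_eq, hR, gt_iff_lt,
      mul_pos_iff_of_pos_left (by norm_num : (0 : ℝ) < 2 ^ 2)]
end
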